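/- arXiv:1805.08270 — 3 statements merged into one kernel-verified Lean document; each statement's English description precedes it below -/
import Mathlib

section
/- Let G be a finite simple graph that is (C4,P6)-free and contains an induced 5-cycle C = v1v2v3v4v5, and let i ∈ {1,...,5} (indices modulo 5). If a vertex x ∈ S(i-2,i+2) has a neighbour in S(i-2,i-1,i) ∪ S(i,i+1,i+2), then x is adjacent to every vertex of S_5. -/
/-!
A vertex `u ∈ S_5` is adjacent to the whole cycle. If `s` is the given neighbour of `x`, then
`s` sees two non-adjacent cycle vertices, both also seen by `u`, so `s ~ u` (otherwise they
form an induced `C4`). Then `x, s, u` and the neighbour of `x` on the cycle not seen by `s`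
would form an induced `C4` unless `x ~ u`.
-/

open SimpleGraph

/-- `G` contains no induced subgraph isomorphic to `H` (`H`-freeness, via graph embeddings). -/
def Free {V W : Type*} (G : SimpleGraph V) (H : SimpleGraph W) : Prop :=
  IsEmpty (H ↪g G)

/-- `v 1, v 2, v 3, v 4, v 0` are the vertices `v₁,…,v₅` of an induced 5-cycle of `G`
(in cyclic order, indices taken modulo 5, with `v 0` playing the role of `v₅`). -/
def IsInducedC5 {V : Type*} (G : SimpleGraph V) (v : ZMod 5 → V) : Prop :=
  Function.Injective v ∧ ∀ i j, G.Adj (v i) (v j) ↔ (j = i + 1 ∨ i = j + 1)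

/-- `S(X)`: the vertices outside the cycle whose neighbourhood on the cycle is exactly
`{v i : i ∈ X}`. -/
def cycS {V : Type*} (G : SimpleGraph V) (v : ZMod 5 → V) (X : Set (ZMod 5)) : Set V :=
  {u | (∀ i, u ≠ v i) ∧ ∀ i, (G.Adj u (v i) ↔ i ∈ X)}

/-- `S_j`: the vertices outside the cycle with exactly `j` neighbours on the cycle. -/
def cycSdeg {V : Type*} (G : SimpleGraph V) (v : ZMod 5 → V) (j : ℕ) : Set V :=
  {u | (∀ i, u ≠ v i) ∧ {i : ZMod 5 | G.Adj u (v i)}.ncard = j}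

/-- `A` is complete to `B`: every vertex of `A` is adjacent to every vertex of `B`. -/
def CompleteTo {V : Type*} (G : SimpleGraph V) (A B : Set V) : Prop :=
  ∀ a ∈ A, ∀ b ∈ B, G.Adj a b

/-- `A` is anti-complete to `B`: there are no edges between `A` and `B`. -/
def AntiCompleteTo {V : Type*} (G : SimpleGraph V) (A B : Set V) : Prop :=
  ∀ a ∈ A, ∀ b ∈ B, ¬ G.Adj a b

section

variable {V : Type*} {G : SimpleGraph V}

lemma Free.adj_of_cycleGraph_four (h : _root_.Free G (cycleGraph 4)) {a b c d : V}
    (hab : G.Adj a b) (hbc : G.Adj b c) (hcd : G.Adj c d) (hda : G.Adj d a)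
    (hac : ¬ G.Adj a c) (hac' : a ≠ c) (hbd' : b ≠ d) : G.Adj b d := by
  by_contra hbd
  refine h.false ⟨⟨![a, b, c, d], ?_⟩, ?_⟩
  · have := hab.ne
    have := hbc.ne
    have := hcd.ne
    have := hda.ne'
    intro p q hpq
    fin_cases p <;> fin_cases q <;> simp_all
  · intro p q
    change G.Adj (![a, b, c, d] p) (![a, b, c, d] q) ↔ (cycleGraph 4).Adj p q
    fin_cases p <;> fin_cases q <;>
      simp_all [cycleGraph_adj, hab.symm, hbc.symm, hcd.symm, hda.symm, G.adj_comm c a,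
        G.adj_comm d b] <;> decide

lemma Free.adj_of_adj_of_common_nonadj_neighbours (h : _root_.Free G (cycleGraph 4))
    {p q s u w x : V} (hpq : ¬ G.Adj p q) (hpq' : p ≠ q)
    (hsp : G.Adj s p) (hsq : G.Adj s q) (hup : G.Adj u p) (huq : G.Adj u q)
    (huw : G.Adj u w) (hsw : ¬ G.Adj s w) (hsw' : s ≠ w)
    (hxs : G.Adj x s) (hxw : G.Adj x w) (hxu : x ≠ u) : G.Adj x u := by
  have hsu : G.Adj s u :=
    h.adj_of_cycleGraph_four hsp.symm hsq huq.symm hup hpq hpq' fun hsu => hsw (hsu ▸ huw)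
  exact h.adj_of_cycleGraph_four hxs.symm hxw huw.symm hsu.symm hsw hsw' hxu

namespace IsInducedC5

variable {v : ZMod 5 → V}

lemma not_adj_add_two (hv : IsInducedC5 G v) (j : ZMod 5) : ¬ G.Adj (v j) (v (j + 2)) := by
  rw [hv.2]
  revert j
  decide

lemma ne_add_two (hv : IsInducedC5 G v) (j : ZMod 5) : v j ≠ v (j + 2) := by
  refine hv.1.ne ?_
  revert j
  decide

end IsInducedC5

lemma adj_of_mem_cycSdeg_five {v : ZMod 5 → V} {u : V} (hu : u ∈ cycSdeg G v 5)
    (j : ZMod 5) : G.Adj u (v j) := by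
  have huniv : {i : ZMod 5 | G.Adj u (v i)} = Set.univ := by
    rw [Set.eq_univ_iff_ncard, hu.2, Nat.card_zmod]
  exact (Set.ext_iff.1 huniv j).2 trivial

lemma exists_of_mem_cycS_union {v : ZMod 5 → V} {i : ZMod 5} {s : V}
    (hs : s ∈ cycS G v {i - 2, i - 1, i} ∪ cycS G v {i, i + 1, i + 2}) :
    ∃ a c, c ∈ ({i - 2, i + 2} : Set (ZMod 5)) ∧
      G.Adj s (v a) ∧ G.Adj s (v (a + 2)) ∧ ¬ G.Adj s (v c) := by
  rcases hs with ⟨-, hs⟩ | ⟨-, hs⟩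
  · refine ⟨i - 2, i + 2, by simp, (hs _).2 (by simp), (hs _).2 (by simp), ?_⟩
    rw [hs]
    simp only [Set.mem_insert_iff, Set.mem_singleton_iff, not_or]
    clear hs
    decide +revert
  · refine ⟨i, i - 2, by simp, (hs _).2 (by simp), (hs _).2 (by simp), ?_⟩
    rw [hs]
    simp only [Set.mem_insert_iff, Set.mem_singleton_iff, not_or]
    clear hs
    decide +revert

end

theorem stmt_2_general {V : Type*} (G : SimpleGraph V)
    (hC4 : _root_.Free G (cycleGraph 4))
    (v : ZMod 5 → V) (hv : IsInducedC5 G v) (i : ZMod 5)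
    (x : V) (hx : x ∈ cycS G v {i - 2, i + 2})
    (hnbr : ∃ s ∈ cycS G v {i - 2, i - 1, i} ∪ cycS G v {i, i + 1, i + 2}, G.Adj x s) :
    ∀ u ∈ cycSdeg G v 5, G.Adj x u := by
  intro u hu
  obtain ⟨s, hs, hxs⟩ := hnbr
  have hs_off : ∀ j, s ≠ v j := by rcases hs with hs | hs <;> exact hs.1
  obtain ⟨a, c, hc, hsa, hsa2, hsc⟩ := exists_of_mem_cycS_union hs
  have hxu : x ≠ u := by
    rintro rfl
    have hxi := (hx.2 i).1 (adj_of_mem_cycSdeg_five hu i)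
    simp only [Set.mem_insert_iff, Set.mem_singleton_iff] at hxi
    clear hx hs hc
    revert hxi
    decide +revert
  exact hC4.adj_of_adj_of_common_nonadj_neighbours (hv.not_adj_add_two a) (hv.ne_add_two a)
    hsa hsa2 (adj_of_mem_cycSdeg_five hu a) (adj_of_mem_cycSdeg_five hu _)
    (adj_of_mem_cycSdeg_five hu c) hsc (hs_off c) hxs ((hx.2 c).2 hc) hxu

theorem stmt_2 {V : Type*} [Fintype V] (G : SimpleGraph V)
    (hC4 : _root_.Free G (cycleGraph 4)) (hP6 : _root_.Free G (pathGraph 6))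
    (v : ZMod 5 → V) (hv : IsInducedC5 G v) (i : ZMod 5)
    (x : V) (hx : x ∈ cycS G v {i - 2, i + 2})
    (hnbr : ∃ s ∈ cycS G v {i - 2, i - 1, i} ∪ cycS G v {i, i + 1, i + 2}, G.Adj x s) :
    ∀ u ∈ cycSdeg G v 5, G.Adj x u :=
  stmt_2_general G hC4 v hv i x hx hnbr
end

section
/- Let G be a finite simple graph that is (C4,P6)-free and contains an induced 5-cycle C = v1v2v3v4v5, and let i ∈ {1,...,5} (indices modulo 5). Then every vertex of S(i-1,i-2,i+2) ∪ S(i+1,i+2,i-2) is either complete or anti-complete to the vertex set of each connected component of the subgraph of G induced by S(i-2,i+2). -/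
open SimpleGraph

/-! If `s` sees `x` but not its neighbour `y` in `S(i-2,i+2)`, then, for `s ∈ S(i-1,i-2,i+2)`,
`y x s v(i-1) v(i) v(i+1)` is an induced `P₆` (and symmetrically for `s ∈ S(i+1,i+2,i-2)`).
So adjacency to `s` propagates along the edges of `G[S(i-2,i+2)]`, hence is constant on each
of its components. -/

section

variable {V : Type*} {G : SimpleGraph V}

lemma Free.false_of_adj_iff_pathGraph_six (hP6 : _root_.Free G (pathGraph 6)) (f : Fin 6 → V)
    (hf : ∀ a b, G.Adj (f a) (f b) ↔ (pathGraph 6).Adj a b) : False := by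
  refine hP6.false ⟨⟨f, fun a b hab => ?_⟩, hf _ _⟩
  -- `f a = f b` would make `a, b` non-adjacent twins, and `P₆` has none
  have twins : ∀ a b : Fin 6, ¬(pathGraph 6).Adj a b →
      (∀ c, (pathGraph 6).Adj a c ↔ (pathGraph 6).Adj b c) → a = b := by
    simp only [pathGraph_adj]
    decide
  exact twins a b (by rw [← hf, hab]; exact G.irrefl) fun c => by rw [← hf, ← hf, hab]

lemma Free.adj_of_adj_of_induced_path_three (hP6 : _root_.Free G (pathGraph 6))
    {s a b c x y : V} (hab : G.Adj a b) (hbc : G.Adj b c) (hac : ¬G.Adj a c)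
    (hsa : G.Adj s a) (hsb : ¬G.Adj s b) (hsc : ¬G.Adj s c)
    (hxa : ¬G.Adj x a) (hxb : ¬G.Adj x b) (hxc : ¬G.Adj x c)
    (hya : ¬G.Adj y a) (hyb : ¬G.Adj y b) (hyc : ¬G.Adj y c)
    (hxy : G.Adj x y) (hsx : G.Adj s x) : G.Adj s y := by
  by_contra hsy
  refine hP6.false_of_adj_iff_pathGraph_six ![y, x, s, a, b, c] fun i j => ?_
  -- `simp` needs each (non-)adjacency in both orientations
  have := hab.symm; have := hbc.symm; have := hxy.symm; have := hsx.symm; have := hsa.symm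
  have := mt G.adj_symm hac; have := mt G.adj_symm hsb; have := mt G.adj_symm hsc
  have := mt G.adj_symm hxa; have := mt G.adj_symm hxb; have := mt G.adj_symm hxc
  have := mt G.adj_symm hya; have := mt G.adj_symm hyb; have := mt G.adj_symm hyc
  have := mt G.adj_symm hsy
  fin_cases i <;> fin_cases j <;> simp [pathGraph_adj, *]

lemma completeTo_or_antiCompleteTo_of_adj_propagates {T : Set V} {s : V}
    (h : ∀ x ∈ T, ∀ y ∈ T, G.Adj x y → G.Adj s x → G.Adj s y)
    (c : (G.induce T).ConnectedComponent) :
    CompleteTo G {s} (Subtype.val '' c.supp) ∨ AntiCompleteTo G {s} (Subtype.val '' c.supp) := by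
  have reach {z w : T} (hzw : (G.induce T).Reachable z w) (hz : G.Adj s z) : G.Adj s w := by
    obtain ⟨p⟩ := hzw
    induction p with
    | nil => exact hz
    | cons hadj _ ih => exact ih (h _ (Subtype.prop _) _ (Subtype.prop _) hadj hz)
  by_cases hex : ∃ z ∈ c.supp, G.Adj s z
  · obtain ⟨z, hzc, hz⟩ := hex
    left
    rintro _ rfl _ ⟨w, hwc, rfl⟩
    exact reach (ConnectedComponent.exact (hzc.trans hwc.symm)) hz
  · right
    rintro _ rfl _ ⟨w, hwc, rfl⟩ hadj
    exact hex ⟨w, hwc, hadj⟩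

lemma not_adj_of_mem_cycS {v : ZMod 5 → V} {X : Set (ZMod 5)} {u : V}
    (hu : u ∈ cycS G v X) {j : ZMod 5} (hj : j ∉ X) : ¬G.Adj u (v j) :=
  mt (hu.2 j).1 hj

end

theorem stmt_4_general {V : Type*} (G : SimpleGraph V)
    (hP6 : _root_.Free G (pathGraph 6))
    (v : ZMod 5 → V) (hv : IsInducedC5 G v) (i : ZMod 5)
    (s : V) (hs : s ∈ cycS G v {i - 1, i - 2, i + 2} ∪ cycS G v {i + 1, i + 2, i - 2})
    (c : (G.induce (cycS G v {i - 2, i + 2})).ConnectedComponent) :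
    CompleteTo G {s} (Subtype.val '' c.supp) ∨
      AntiCompleteTo G {s} (Subtype.val '' c.supp) := by
  refine completeTo_or_antiCompleteTo_of_adj_propagates (fun x hx y hy => ?_) c
  have hpre : G.Adj (v (i - 1)) (v i) := (hv.2 _ _).2 (by grind)
  have hsuc : G.Adj (v i) (v (i + 1)) := (hv.2 _ _).2 (by grind)
  have hends : ¬G.Adj (v (i - 1)) (v (i + 1)) := mt (hv.2 _ _).1 (by grind)
  have hT : ∀ z ∈ cycS G v {i - 2, i + 2},
      ¬G.Adj z (v (i - 1)) ∧ ¬G.Adj z (v i) ∧ ¬G.Adj z (v (i + 1)) := fun z hz =>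
    ⟨not_adj_of_mem_cycS hz (by grind), not_adj_of_mem_cycS hz (by grind),
      not_adj_of_mem_cycS hz (by grind)⟩
  obtain ⟨hxa, hxb, hxc⟩ := hT x hx
  obtain ⟨hya, hyb, hyc⟩ := hT y hy
  rcases hs with hs | hs
  · exact hP6.adj_of_adj_of_induced_path_three hpre hsuc hends ((hs.2 _).2 (by grind))
      (not_adj_of_mem_cycS hs (by grind)) (not_adj_of_mem_cycS hs (by grind))
      hxa hxb hxc hya hyb hyc
  · exact hP6.adj_of_adj_of_induced_path_three hsuc.symm hpre.symm (mt G.adj_symm hends)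
      ((hs.2 _).2 (by grind)) (not_adj_of_mem_cycS hs (by grind))
      (not_adj_of_mem_cycS hs (by grind)) hxc hxb hxa hyc hyb hya

theorem stmt_4 {V : Type*} [Fintype V] (G : SimpleGraph V)
    (hC4 : _root_.Free G (cycleGraph 4)) (hP6 : _root_.Free G (pathGraph 6))
    (v : ZMod 5 → V) (hv : IsInducedC5 G v) (i : ZMod 5)
    (s : V) (hs : s ∈ cycS G v {i - 1, i - 2, i + 2} ∪ cycS G v {i + 1, i + 2, i - 2})
    (c : (G.induce (cycS G v {i - 2, i + 2})).ConnectedComponent) :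
    CompleteTo G {s} (Subtype.val '' c.supp) ∨
      AntiCompleteTo G {s} (Subtype.val '' c.supp) :=
  stmt_4_general G hP6 v hv i s hs c
end

section
/- Let G be a finite simple (C4,C6,F1,F2,P6)-free strong atom containing an induced 5-cycle, and let C = v1v2v3v4v5 be an induced 5-cycle of G such that |S_5(C)| is maximum over all induced 5-cycles of G and, subject to that, |S_3(C)| is minimum. Then for each i ∈ {1,...,5} (indices modulo 5), S(i) is anti-complete to S(i-2,i-1,i) ∪ S(i,i+1,i+2). -/
open SimpleGraph

/-- `K` is a clique cutset of `G`: a clique whose removal increases the number of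
connected components. -/
def IsCliqueCutset {V : Type*} (G : SimpleGraph V) (K : Set V) : Prop :=
  G.IsClique K ∧
    Nat.card G.ConnectedComponent < Nat.card (G.induce Kᶜ).ConnectedComponent

/-- An atom is a graph with no clique cutset. -/
def IsGraphAtom {V : Type*} (G : SimpleGraph V) : Prop :=
  ∀ K : Set V, ¬ IsCliqueCutset G K

/-- A strong atom: an atom with no universal vertex and no pair of (true) twins. -/
def IsStrongAtom {V : Type*} (G : SimpleGraph V) : Prop :=
  IsGraphAtom G ∧ (∀ u : V, ¬ ∀ w, w ≠ u → G.Adj u w) ∧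
    ∀ u w : V, G.Adj u w → ¬ ∀ z, z ≠ u → z ≠ w → (G.Adj z u ↔ G.Adj z w)

/-- The graph `F₁` of the paper: vertices `0,…,4` are `v₁,…,v₅` (a 5-cycle), `5 = x`,
`6 = y`, `7 = z`; edges: the 5-cycle, `yv₂, yv₃, zv₄, zv₅, xv₃, xv₄, xy, xz`. -/
def F1 : SimpleGraph (Fin 8) :=
  SimpleGraph.fromRel (fun a b => (a, b) ∈
    [((0 : Fin 8), (1 : Fin 8)), (1, 2), (2, 3), (3, 4), (4, 0),
     (6, 1), (6, 2), (7, 3), (7, 4), (5, 2), (5, 3), (5, 6), (5, 7)])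

/-- The graph `F₂` of the paper: vertices `0,…,4` are `v₁,…,v₅` (a 5-cycle), `5 = t`,
`6 = x`, `7 = y`; edges: the 5-cycle, `yv₂, yv₃, xv₄, xv₅, tv₅, tv₁, tv₂, tx, ty`. -/
def F2 : SimpleGraph (Fin 8) :=
  SimpleGraph.fromRel (fun a b => (a, b) ∈
    [((0 : Fin 8), (1 : Fin 8)), (1, 2), (2, 3), (3, 4), (4, 0),
     (7, 1), (7, 2), (6, 3), (6, 4), (5, 4), (5, 0), (5, 1), (5, 6), (5, 7)])

/-- The underlying 5-cycle `v₁,…,v₅` (as a map `ZMod 5 → V`, with `v 0 = v₅`) of an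
(induced) copy of `F₁` or `F₂` given by a vertex map `f : Fin 8 → V`. -/
def underlyingC5 {V : Type*} (f : Fin 8 → V) : ZMod 5 → V :=
  fun i => f ⟨(i - 1).val, by have := ZMod.val_lt (i - 1); omega⟩


/-!
By the dihedral symmetry of the 5-cycle it suffices to show that no `a ∈ S(0)` is adjacent to a
`b ∈ S(0,1,2)`. Suppose `a ∼ b`. Let `P` be the set of vertices of `S(0)` adjacent to `b`, and let
`K` consist of `v 0`, of `S₅`, and of the vertices of `S(0,1,2) ∪ S(4,0,1)` with a neighbour
in `P`. Excluding induced `C₄`, `C₆`, `P₆` and `F₂` shows that every neighbour of a vertex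
`z ∈ P` lies in `P ∪ K`, except possibly a vertex `x ∈ S(2,3)` adjacent to `b`; that one is ruled
out by the maximality of `|S₅|`, since `z x v₂ v₁ v₀` is then an induced 5-cycle whose `S₅`
contains `S₅ ∪ {b}`. The vertex `v 0` is adjacent to all of `K`, and any two other vertices of
`K` have two non-adjacent common neighbours on the cycle, which makes them adjacent in a
`C₄`-free graph, except for pairs in `S(0,1,2) × S(4,0,1)`; these are adjacent by `C₄`- and
`P₆`-freeness, using their neighbours in `P`. So `K` is a clique cutset separating `a ∈ P` from
`v 3 ∉ P ∪ K`.
-/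

section

variable {V : Type*} {G : SimpleGraph V}

theorem Free.false_of_adj_iff {W : Type*} {H : SimpleGraph W} (hH : _root_.Free G H)
    (f : W → V) (hf : Function.Injective f) (hadj : ∀ i j, G.Adj (f i) (f j) ↔ H.Adj i j) :
    False :=
  hH.false ⟨⟨f, hf⟩, hadj _ _⟩

theorem Free.not_inducedC4 (h : _root_.Free G (cycleGraph 4)) (a b c d : V) :
    ¬ (G.Adj a b ∧ G.Adj b c ∧ G.Adj c d ∧ G.Adj d a ∧ ¬ G.Adj a c ∧ ¬ G.Adj b d ∧
      a ≠ c ∧ b ≠ d) := by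
  intro hG
  refine h.false_of_adj_iff ![a, b, c, d] ?_ ?_
  · intro i j hij
    fin_cases i <;> fin_cases j <;> simp at hij ⊢ <;> grind [G.ne_of_adj]
  · intro i j
    fin_cases i <;> fin_cases j <;> simp [cycleGraph_adj] <;> grind [G.adj_comm]

theorem Free.not_inducedC6 (h : _root_.Free G (cycleGraph 6)) (a b c d e f : V) :
    ¬ (G.Adj a b ∧ G.Adj b c ∧ G.Adj c d ∧ G.Adj d e ∧ G.Adj e f ∧ G.Adj f a ∧
      ¬ G.Adj a c ∧ ¬ G.Adj a d ∧ ¬ G.Adj a e ∧ ¬ G.Adj b d ∧ ¬ G.Adj b e ∧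
      ¬ G.Adj b f ∧ ¬ G.Adj c e ∧ ¬ G.Adj c f ∧ ¬ G.Adj d f) := by
  intro hG
  refine h.false_of_adj_iff ![a, b, c, d, e, f] ?_ ?_
  · intro i j hij
    fin_cases i <;> fin_cases j <;> simp at hij ⊢ <;> grind [G.ne_of_adj, G.adj_comm]
  · intro i j
    fin_cases i <;> fin_cases j <;> simp [cycleGraph_adj] <;> grind [G.adj_comm]

theorem Free.not_inducedP6 (h : _root_.Free G (pathGraph 6)) (a b c d e f : V) :
    ¬ (G.Adj a b ∧ G.Adj b c ∧ G.Adj c d ∧ G.Adj d e ∧ G.Adj e f ∧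
      ¬ G.Adj a c ∧ ¬ G.Adj a d ∧ ¬ G.Adj a e ∧ ¬ G.Adj a f ∧ ¬ G.Adj b d ∧
      ¬ G.Adj b e ∧ ¬ G.Adj b f ∧ ¬ G.Adj c e ∧ ¬ G.Adj c f ∧ ¬ G.Adj d f) := by
  intro hG
  refine h.false_of_adj_iff ![a, b, c, d, e, f] ?_ ?_
  · intro i j hij
    fin_cases i <;> fin_cases j <;> simp at hij ⊢ <;> grind [G.ne_of_adj, G.adj_comm]
  · intro i j
    fin_cases i <;> fin_cases j <;> simp [pathGraph_adj] <;> grind [G.adj_comm]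

theorem Free.not_inducedF2 (h : _root_.Free G F2) (q₀ q₁ q₂ q₃ q₄ t x y : V) :
    ¬ (G.Adj q₀ q₁ ∧ G.Adj q₁ q₂ ∧ G.Adj q₂ q₃ ∧ G.Adj q₃ q₄ ∧ G.Adj q₄ q₀ ∧
      G.Adj y q₁ ∧ G.Adj y q₂ ∧ G.Adj x q₃ ∧ G.Adj x q₄ ∧
      G.Adj t q₄ ∧ G.Adj t q₀ ∧ G.Adj t q₁ ∧ G.Adj t x ∧ G.Adj t y ∧
      ¬ G.Adj q₀ q₂ ∧ ¬ G.Adj q₀ q₃ ∧ ¬ G.Adj q₁ q₃ ∧ ¬ G.Adj q₁ q₄ ∧ ¬ G.Adj q₂ q₄ ∧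
      ¬ G.Adj y q₀ ∧ ¬ G.Adj y q₃ ∧ ¬ G.Adj y q₄ ∧ ¬ G.Adj x q₀ ∧ ¬ G.Adj x q₁ ∧
      ¬ G.Adj x q₂ ∧ ¬ G.Adj t q₂ ∧ ¬ G.Adj t q₃ ∧ ¬ G.Adj x y) := by
  intro hG
  refine h.false_of_adj_iff ![q₀, q₁, q₂, q₃, q₄, t, x, y] ?_ ?_
  · intro i j hij
    fin_cases i <;> fin_cases j <;> simp at hij ⊢ <;> grind [G.ne_of_adj, G.adj_comm]
  · intro i j
    fin_cases i <;> fin_cases j <;> simp [F2, fromRel_adj] <;> grind [G.adj_comm]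

theorem Free.adj_of_nonadj_common_neighbors (h : _root_.Free G (cycleGraph 4)) {p q : V}
    (x y : V) (hpq : p ≠ q ∧ x ≠ y ∧ ¬ G.Adj x y ∧
      G.Adj p x ∧ G.Adj p y ∧ G.Adj q x ∧ G.Adj q y) :
    G.Adj p q := by
  obtain ⟨hpq, hxy, hnxy, hpx, hpy, hqx, hqy⟩ := hpq
  by_contra hnpq
  exact h.not_inducedC4 p x q y ⟨hpx, hqx.symm, hqy, hpy.symm, hnpq, hnxy, hpq, hxy⟩

theorem Free.isClique_of_forall_adj (h : _root_.Free G (cycleGraph 4)) {s : Set V} (x y : V)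
    (hxy : x ≠ y) (hnxy : ¬ G.Adj x y) (hs : ∀ p ∈ s, G.Adj p x ∧ G.Adj p y) :
    G.IsClique s :=
  fun p hp q hq hpq => h.adj_of_nonadj_common_neighbors x y
    ⟨hpq, hxy, hnxy, (hs p hp).1, (hs p hp).2, (hs q hq).1, (hs q hq).2⟩

/-- Since every vertex of `K` is reachable from `x ∉ K`, the components of `G - K` map onto
those of `G`; having no clique cutset forces this map to be injective. -/
theorem IsGraphAtom.reachable_induce_compl [Finite V] (hG : IsGraphAtom G) {K : Set V}
    (hK : G.IsClique K) {x y : V} (hx : x ∉ K) (hy : y ∉ K) (hxy : G.Reachable x y)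
    (hKx : ∀ k ∈ K, G.Reachable x k) : (G.induce Kᶜ).Reachable ⟨x, hx⟩ ⟨y, hy⟩ := by
  let f := ConnectedComponent.map (Embedding.induce (G := G) Kᶜ).toHom
  have hsurj : Function.Surjective f := by
    intro c
    induction c using ConnectedComponent.ind with
    | _ t =>
      by_cases ht : t ∈ K
      · exact ⟨(G.induce Kᶜ).connectedComponentMk ⟨x, hx⟩,
          ConnectedComponent.sound (hKx t ht)⟩
      · exact ⟨(G.induce Kᶜ).connectedComponentMk ⟨t, ht⟩, rfl⟩
  have hcard := not_lt.mp fun hlt => hG K ⟨hK, hlt⟩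
  exact ConnectedComponent.exact <| (hsurj.bijective_of_nat_card_le hcard).injective <|
    ConnectedComponent.sound hxy

theorem IsGraphAtom.mem_of_reachable [Finite V] (hG : IsGraphAtom G) {K A : Set V}
    (hK : G.IsClique K) (hA : ∀ u ∈ A, ∀ w, G.Adj u w → w ∈ A ∨ w ∈ K) {x y : V}
    (hxA : x ∈ A) (hx : x ∉ K) (hy : y ∉ K) (hxy : G.Reachable x y)
    (hKx : ∀ k ∈ K, G.Reachable x k) : y ∈ A := by
  obtain ⟨p⟩ := hG.reachable_induce_compl hK hx hy hxy hKx
  suffices ∀ s t : ↥Kᶜ, (G.induce Kᶜ).Walk s t → s.1 ∈ A → t.1 ∈ A from this _ _ p hxA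
  intro s t q
  induction q with
  | nil => exact id
  | @cons _ r _ hst _ ih => exact fun hs => ih ((hA _ hs _ hst).resolve_right r.2)

theorem ZMod.forall_five {p : ZMod 5 → Prop} :
    (∀ i, p i) ↔ p 0 ∧ p 1 ∧ p 2 ∧ p 3 ∧ p 4 :=
  ⟨fun h => ⟨h 0, h 1, h 2, h 3, h 4⟩, fun ⟨h0, h1, h2, h3, h4⟩ i => by
    fin_cases i <;> assumption⟩

variable {v : ZMod 5 → V}

theorem IsInducedC5.comp_equiv (hv : IsInducedC5 G v) (σ : ZMod 5 ≃ ZMod 5)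
    (hσ : ∀ i j, (σ j = σ i + 1 ∨ σ i = σ j + 1) ↔ (j = i + 1 ∨ i = j + 1)) :
    IsInducedC5 G (v ∘ σ) :=
  ⟨hv.1.comp σ.injective, fun i j => (hv.2 _ _).trans (hσ i j)⟩

theorem IsInducedC5.adj_add_one_of_adj_of_adj (hv : IsInducedC5 G v)
    (hC4 : _root_.Free G (cycleGraph 4)) {u : V} (hu : ∀ i, u ≠ v i) {i : ZMod 5}
    (h₀ : G.Adj u (v i)) (h₂ : G.Adj u (v (i + 2))) : G.Adj u (v (i + 1)) :=
  hC4.adj_of_nonadj_common_neighbors (v i) (v (i + 2)) (by grind [hv.2, hv.1.eq_iff])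

theorem isInducedC5_of_adj {a₀ a₁ a₂ a₃ a₄ : V}
    (h : G.Adj a₀ a₁ ∧ G.Adj a₁ a₂ ∧ G.Adj a₂ a₃ ∧ G.Adj a₃ a₄ ∧ G.Adj a₄ a₀ ∧
      ¬ G.Adj a₀ a₂ ∧ ¬ G.Adj a₀ a₃ ∧ ¬ G.Adj a₁ a₃ ∧ ¬ G.Adj a₁ a₄ ∧ ¬ G.Adj a₂ a₄) :
    IsInducedC5 G ![a₀, a₁, a₂, a₃, a₄] := by
  let w : ZMod 5 → V := ![a₀, a₁, a₂, a₃, a₄]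
  have e : w 0 = a₀ ∧ w 1 = a₁ ∧ w 2 = a₂ ∧ w 3 = a₃ ∧ w 4 = a₄ :=
    ⟨rfl, rfl, rfl, rfl, rfl⟩
  change Function.Injective w ∧ ∀ i j, G.Adj (w i) (w j) ↔ _
  simp +decide only [Function.Injective, ZMod.forall_five, e]
  grind [G.ne_of_adj, G.adj_comm]

theorem cycS_comp_equiv (σ : ZMod 5 ≃ ZMod 5) (X : Set (ZMod 5)) :
    cycS G (v ∘ σ) X = cycS G v (σ '' X) := by
  ext u
  simp only [cycS, Set.mem_ofPred_eq, Function.comp_apply,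
    ← σ.forall_congr_right (q := fun j => u ≠ v j),
    ← σ.forall_congr_right (q := fun j => G.Adj u (v j) ↔ j ∈ σ '' X),
    σ.injective.mem_set_image]

theorem mem_cycS_univ {u : V} :
    u ∈ cycS G v Set.univ ↔ (∀ i, u ≠ v i) ∧ ∀ i, G.Adj u (v i) := by
  simp [cycS]

theorem cycSdeg_five : cycSdeg G v 5 = cycS G v Set.univ := by
  have hcard : Nat.card (ZMod 5) = 5 := by simp
  ext u
  rw [mem_cycS_univ]
  refine and_congr_right fun _ => ?_
  change _ ↔ ∀ i, i ∈ {i | G.Adj u (v i)}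
  rw [← Set.eq_univ_iff_forall]
  exact ⟨fun h => by_contra fun hne => (Set.ncard_lt_card hne).ne (h.trans hcard.symm),
    fun h => by rw [h, Set.ncard_univ, hcard]⟩

variable {b : V}

def pendants (G : SimpleGraph V) (v : ZMod 5 → V) (b : V) : Set V :=
  {z | z ∈ cycS G v {0} ∧ G.Adj z b}

def cutClique (G : SimpleGraph V) (v : ZMod 5 → V) (b : V) : Set V :=
  insert (v 0) (cycS G v Set.univ ∪
    (cycS G v {0, 1, 2} ∪ cycS G v {4, 0, 1}) ∩ {u | ∃ z ∈ pendants G v b, G.Adj u z})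

theorem eq_or_adj_zero_of_mem_cutClique {u : V} (hu : u ∈ cutClique G v b) :
    u = v 0 ∨ G.Adj u (v 0) := by
  rcases hu with rfl | hu | ⟨hu | hu, -⟩
  · exact Or.inl rfl
  · exact Or.inr ((mem_cycS_univ.1 hu).2 0)
  all_goals exact Or.inr ((hu.2 0).2 (by simp))

theorem notMem_cutClique_of_not_adj_one {u : V} (hu : u ≠ v 0) (hu₁ : ¬ G.Adj u (v 1)) :
    u ∉ cutClique G v b := by
  rintro (rfl | hK | ⟨hK | hK, -⟩)
  · exact hu rfl
  · exact hu₁ ((mem_cycS_univ.1 hK).2 1)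
  all_goals exact hu₁ ((hK.2 1).2 (by simp))

theorem not_adj_of_mem_pendants_of_mem_cycS_two_three [Finite V] (hv : IsInducedC5 G v)
    (hC4 : _root_.Free G (cycleGraph 4))
    (hmax : ∀ w : ZMod 5 → V, IsInducedC5 G w →
      (cycSdeg G w 5).ncard ≤ (cycSdeg G v 5).ncard)
    (hb : b ∈ cycS G v {0, 1, 2}) {z x : V} (hz : z ∈ pendants G v b)
    (hx : x ∈ cycS G v {2, 3}) (hxb : G.Adj x b) : ¬ G.Adj z x := by
  intro hzx
  obtain ⟨⟨hzc, hzv⟩, hzb⟩ := hz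
  obtain ⟨hxc, hxv⟩ := hx
  obtain ⟨hbc, hbv⟩ := hb
  have hvv := hv.2
  have hvinj : ∀ i j, v i = v j ↔ i = j := fun _ _ => hv.1.eq_iff
  let w : ZMod 5 → V := ![z, x, v 2, v 1, v 0]
  have e : w 0 = z ∧ w 1 = x ∧ w 2 = v 2 ∧ w 3 = v 1 ∧ w 4 = v 0 :=
    ⟨rfl, rfl, rfl, rfl, rfl⟩
  have hw : IsInducedC5 G w := isInducedC5_of_adj (by grind (splits := 30) [G.adj_comm])
  have hsub : cycS G v Set.univ ⊂ cycS G w Set.univ := by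
    rw [Set.ssubset_iff_of_subset]
    · refine ⟨b, ?_, fun hb5 => ?_⟩
      · simp only [mem_cycS_univ, ZMod.forall_five, e]
        grind (splits := 30) [G.adj_comm]
      · grind [mem_cycS_univ]
    · intro u hu
      obtain ⟨huc, huv⟩ := mem_cycS_univ.1 hu
      have hub : G.Adj u b :=
        hC4.adj_of_nonadj_common_neighbors (v 0) (v 2) (by grind (splits := 30) [G.adj_comm])
      have hux : G.Adj u x :=
        hC4.adj_of_nonadj_common_neighbors b (v 3) (by grind (splits := 30) [G.adj_comm])
      have huz : G.Adj u z :=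
        hC4.adj_of_nonadj_common_neighbors (v 0) x (by grind (splits := 30) [G.adj_comm])
      simp only [mem_cycS_univ, ZMod.forall_five, e]
      grind (splits := 30) [G.adj_comm]
  have hle := hmax w hw
  rw [cycSdeg_five, cycSdeg_five] at hle
  exact (Set.ncard_lt_ncard hsub).not_ge hle

theorem adj_zero_of_adj_mem_pendants [Finite V] (hv : IsInducedC5 G v)
    (hC4 : _root_.Free G (cycleGraph 4)) (hC6 : _root_.Free G (cycleGraph 6))
    (hP6 : _root_.Free G (pathGraph 6))
    (hmax : ∀ w : ZMod 5 → V, IsInducedC5 G w →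
      (cycSdeg G w 5).ncard ≤ (cycSdeg G v 5).ncard)
    (hb : b ∈ cycS G v {0, 1, 2}) {z w : V} (hz : z ∈ pendants G v b) (hzw : G.Adj z w)
    (hwc : ∀ i, w ≠ v i) : G.Adj w (v 0) := by
  have ⟨⟨hzc, hzv⟩, hzb⟩ := hz
  have ⟨hbc, hbv⟩ := hb
  have hvv := hv.2
  have hvinj : ∀ i j, v i = v j ↔ i = j := fun _ _ => hv.1.eq_iff
  by_contra hw0
  have hw1 : ¬ G.Adj w (v 1) := fun hw1 =>
    hC4.not_inducedC4 w (v 1) (v 0) z (by grind (splits := 30) [G.adj_comm])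
  have hw4 : ¬ G.Adj w (v 4) := fun hw4 =>
    hC4.not_inducedC4 w (v 4) (v 0) z (by grind (splits := 30) [G.adj_comm])
  by_cases hw2 : G.Adj w (v 2) <;> by_cases hw3 : G.Adj w (v 3)
  · by_cases hwb : G.Adj w b
    · refine not_adj_of_mem_pendants_of_mem_cycS_two_three hv hC4 hmax hb hz
        ⟨hwc, ?_⟩ hwb hzw
      simp +decide [ZMod.forall_five, hw0, hw1, hw2, hw3, hw4]
    · exact hC4.not_inducedC4 w (v 2) b z (by grind (splits := 30) [G.adj_comm])
  · exact hC6.not_inducedC6 z w (v 2) (v 3) (v 4) (v 0)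
      (by grind (splits := 30) [G.adj_comm])
  · exact hC6.not_inducedC6 z w (v 3) (v 2) (v 1) (v 0)
      (by grind (splits := 30) [G.adj_comm])
  · exact hP6.not_inducedP6 w z (v 0) (v 1) (v 2) (v 3)
      (by grind (splits := 30) [G.adj_comm])

theorem mem_pendants_or_cutClique_of_adj_zero (hv : IsInducedC5 G v)
    (hC4 : _root_.Free G (cycleGraph 4)) (hP6 : _root_.Free G (pathGraph 6))
    (hF2 : _root_.Free G F2) (hb : b ∈ cycS G v {0, 1, 2}) {z w : V}
    (hz : z ∈ pendants G v b) (hzw : G.Adj z w) (hwc : ∀ i, w ≠ v i)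
    (hw0 : G.Adj w (v 0)) : w ∈ pendants G v b ∨ w ∈ cutClique G v b := by
  have ⟨⟨hzc, hzv⟩, hzb⟩ := hz
  have ⟨hbc, hbv⟩ := hb
  have hvv := hv.2
  have hvinj : ∀ i j, v i = v j ↔ i = j := fun _ _ => hv.1.eq_iff
  by_cases hw1 : G.Adj w (v 1) <;> by_cases hw4 : G.Adj w (v 4)
  · by_cases hw2 : G.Adj w (v 2)
    · refine Or.inr <| Set.mem_insert_of_mem _ <| Or.inl <| mem_cycS_univ.2 ⟨hwc, ?_⟩
      exact ZMod.forall_five.2 ⟨hw0, hw1, hw2, hv.adj_add_one_of_adj_of_adj hC4 hwc hw2 hw4, hw4⟩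
    · have hw3 : ¬ G.Adj w (v 3) := fun hw3 => hw2 (hv.adj_add_one_of_adj_of_adj hC4 hwc hw1 hw3)
      refine Or.inr <| Set.mem_insert_of_mem _ <|
        Or.inr ⟨Or.inr ⟨hwc, ?_⟩, z, hz, hzw.symm⟩
      simp +decide [ZMod.forall_five, hw0, hw1, hw2, hw3, hw4]
  · have hw3 : ¬ G.Adj w (v 3) := fun hw3 => hw4 (hv.adj_add_one_of_adj_of_adj hC4 hwc hw3 hw0)
    by_cases hw2 : G.Adj w (v 2)
    · refine Or.inr <| Set.mem_insert_of_mem _ <|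
        Or.inr ⟨Or.inl ⟨hwc, ?_⟩, z, hz, hzw.symm⟩
      simp +decide [ZMod.forall_five, hw0, hw1, hw2, hw3, hw4]
    · exact (hP6.not_inducedP6 z w (v 1) (v 2) (v 3) (v 4)
        (by grind (splits := 30) [G.adj_comm])).elim
  · have hw2 : ¬ G.Adj w (v 2) := fun hw2 => hw1 (hv.adj_add_one_of_adj_of_adj hC4 hwc hw0 hw2)
    by_cases hw3 : G.Adj w (v 3)
    · by_cases hwb : G.Adj w b
      · exact (hC4.not_inducedC4 w b (v 2) (v 3)
          (by grind (splits := 30) [G.adj_comm])).elim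
      · exact (hF2.not_inducedF2 z b (v 2) (v 3) w (v 0) (v 4) (v 1)
          (by grind (splits := 40) [G.adj_comm])).elim
    · exact (hP6.not_inducedP6 z w (v 4) (v 3) (v 2) (v 1)
        (by grind (splits := 30) [G.adj_comm])).elim
  · have hw2 : ¬ G.Adj w (v 2) := fun hw2 => hw1 (hv.adj_add_one_of_adj_of_adj hC4 hwc hw0 hw2)
    have hw3 : ¬ G.Adj w (v 3) := fun hw3 => hw4 (hv.adj_add_one_of_adj_of_adj hC4 hwc hw3 hw0)
    by_cases hwb : G.Adj w b
    · refine Or.inl ⟨⟨hwc, ?_⟩, hwb⟩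
      simp +decide [ZMod.forall_five, hw0, hw1, hw2, hw3, hw4]
    · exact (hP6.not_inducedP6 w z b (v 2) (v 3) (v 4)
        (by grind (splits := 30) [G.adj_comm])).elim

theorem mem_pendants_or_cutClique_of_adj [Finite V] (hv : IsInducedC5 G v)
    (hC4 : _root_.Free G (cycleGraph 4)) (hC6 : _root_.Free G (cycleGraph 6))
    (hP6 : _root_.Free G (pathGraph 6)) (hF2 : _root_.Free G F2)
    (hmax : ∀ w : ZMod 5 → V, IsInducedC5 G w →
      (cycSdeg G w 5).ncard ≤ (cycSdeg G v 5).ncard)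
    (hb : b ∈ cycS G v {0, 1, 2}) {z w : V} (hz : z ∈ pendants G v b) (hzw : G.Adj z w) :
    w ∈ pendants G v b ∨ w ∈ cutClique G v b := by
  by_cases hw : w = v 0
  · exact Or.inr (hw ▸ Set.mem_insert _ _)
  have hwc : ∀ i, w ≠ v i := fun i hi => by
    have hi0 : i = 0 := by simpa using (hz.1.2 i).1 (hi ▸ hzw)
    exact hw (hi0 ▸ hi)
  exact mem_pendants_or_cutClique_of_adj_zero hv hC4 hP6 hF2 hb hz hzw hwc
    (adj_zero_of_adj_mem_pendants hv hC4 hC6 hP6 hmax hb hz hzw hwc)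

theorem adj_of_mem_cycS_of_adj_mem_cycS_zero (hv : IsInducedC5 G v)
    (hC4 : _root_.Free G (cycleGraph 4)) (hP6 : _root_.Free G (pathGraph 6)) {x y z₁ z₂ : V}
    (hx : x ∈ cycS G v {4, 0, 1}) (hy : y ∈ cycS G v {0, 1, 2}) (hz₁ : z₁ ∈ cycS G v {0})
    (hz₂ : z₂ ∈ cycS G v {0}) (hxz : G.Adj x z₁) (hyz : G.Adj y z₂) : G.Adj x y := by
  obtain ⟨hxc, hxv⟩ := hx
  obtain ⟨hyc, hyv⟩ := hy
  obtain ⟨hz₁c, hz₁v⟩ := hz₁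
  obtain ⟨hz₂c, hz₂v⟩ := hz₂
  have hvv := hv.2
  have hvinj : ∀ i j, v i = v j ↔ i = j := fun _ _ => hv.1.eq_iff
  by_contra hxy
  by_cases hyz₁ : G.Adj y z₁
  · exact hC4.not_inducedC4 (v 1) x z₁ y (by grind (splits := 30) [G.adj_comm])
  by_cases hxz₂ : G.Adj x z₂
  · exact hC4.not_inducedC4 (v 1) x z₂ y (by grind (splits := 30) [G.adj_comm])
  by_cases hz : G.Adj z₁ z₂
  · exact hP6.not_inducedP6 (v 2) (v 3) (v 4) x z₁ z₂ (by grind (splits := 30) [G.adj_comm])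
  · exact hP6.not_inducedP6 (v 3) (v 4) x (v 1) y z₂ (by grind (splits := 30) [G.adj_comm])

theorem isClique_cutClique (hv : IsInducedC5 G v) (hC4 : _root_.Free G (cycleGraph 4))
    (hP6 : _root_.Free G (pathGraph 6)) : G.IsClique (cutClique G v b) := by
  have hvv := hv.2
  have hvinj : ∀ i j, v i = v j ↔ i = j := fun _ _ => hv.1.eq_iff
  set N := {u | ∃ z ∈ pendants G v b, G.Adj u z}
  have h02 : G.IsClique (cycS G v Set.univ ∪ cycS G v {0, 1, 2} ∩ N) :=
    hC4.isClique_of_forall_adj (v 0) (v 2) (by grind) (by grind) fun p hp => by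
      rcases hp with hp | ⟨hp, -⟩
      · exact ⟨(mem_cycS_univ.1 hp).2 0, (mem_cycS_univ.1 hp).2 2⟩
      · exact ⟨(hp.2 0).2 (by simp), (hp.2 2).2 (by simp)⟩
  have h41 : G.IsClique (cycS G v Set.univ ∪ cycS G v {4, 0, 1} ∩ N) :=
    hC4.isClique_of_forall_adj (v 4) (v 1) (by grind) (by grind) fun p hp => by
      rcases hp with hp | ⟨hp, -⟩
      · exact ⟨(mem_cycS_univ.1 hp).2 4, (mem_cycS_univ.1 hp).2 1⟩
      · exact ⟨(hp.2 4).2 (by simp), (hp.2 1).2 (by simp)⟩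
  have hYX : ∀ p ∈ cycS G v {0, 1, 2} ∩ N, ∀ q ∈ cycS G v {4, 0, 1} ∩ N, G.Adj p q :=
    fun p ⟨hp, _, hzp, hpz⟩ q ⟨hq, _, hzq, hqz⟩ =>
      (adj_of_mem_cycS_of_adj_mem_cycS_zero hv hC4 hP6 hq hp hzq.1 hzp.1 hqz hpz).symm
  have hK0 : ∀ u ∈ cutClique G v b, v 0 ≠ u → G.Adj (v 0) u := fun u hu hne =>
    ((eq_or_adj_zero_of_mem_cutClique hu).resolve_left hne.symm).symm
  rw [cutClique, isClique_insert]
  refine ⟨fun p hp q hq hpq => ?_, fun u hu => hK0 u (Set.mem_insert_of_mem _ hu)⟩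
  rw [Set.union_inter_distrib_right] at hp hq
  rcases hp with hp | hp | hp <;> rcases hq with hq | hq | hq
  · exact h02 (Or.inl hp) (Or.inl hq) hpq
  · exact h02 (Or.inl hp) (Or.inr hq) hpq
  · exact h41 (Or.inl hp) (Or.inr hq) hpq
  · exact h02 (Or.inr hp) (Or.inl hq) hpq
  · exact h02 (Or.inr hp) (Or.inr hq) hpq
  · exact hYX p hp q hq
  · exact h41 (Or.inr hp) (Or.inl hq) hpq
  · exact (hYX q hq p hp).symm
  · exact h41 (Or.inr hp) (Or.inr hq) hpq

theorem antiCompleteTo_cycS_zero [Finite V] (hv : IsInducedC5 G v)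
    (hC4 : _root_.Free G (cycleGraph 4)) (hC6 : _root_.Free G (cycleGraph 6))
    (hP6 : _root_.Free G (pathGraph 6)) (hF2 : _root_.Free G F2) (hG : IsGraphAtom G)
    (hmax : ∀ w : ZMod 5 → V, IsInducedC5 G w →
      (cycSdeg G w 5).ncard ≤ (cycSdeg G v 5).ncard) :
    AntiCompleteTo G (cycS G v {0}) (cycS G v {0, 1, 2}) := by
  intro a ha b hb hab
  have hvv := hv.2
  have hvinj : ∀ i j, v i = v j ↔ i = j := fun _ _ => hv.1.eq_iff
  have ha0 : G.Adj a (v 0) := (ha.2 0).2 rfl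
  have haK : a ∉ cutClique G v b :=
    notMem_cutClique_of_not_adj_one (ha.1 0) fun h => absurd ((ha.2 1).1 h) (by simp +decide)
  have hv3K : v 3 ∉ cutClique G v b := notMem_cutClique_of_not_adj_one (by grind) (by grind)
  have hKa : ∀ k ∈ cutClique G v b, G.Reachable a k := fun k hk => by
    rcases eq_or_adj_zero_of_mem_cutClique hk with rfl | hk0
    · exact ha0.reachable
    · exact ha0.reachable.trans hk0.symm.reachable
  have ha3 : G.Reachable a (v 3) := ha0.reachable.trans <|
    ((hvv 0 4).2 (by decide)).reachable.trans ((hvv 4 3).2 (by decide)).reachable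
  have hv3 : v 3 ∈ pendants G v b :=
    hG.mem_of_reachable (isClique_cutClique hv hC4 hP6)
      (fun z hz w hzw => mem_pendants_or_cutClique_of_adj hv hC4 hC6 hP6 hF2 hmax hb hz hzw)
      ⟨ha, hab⟩ haK hv3K ha3 hKa
  exact hv3.1.1 3 rfl

theorem antiCompleteTo_cycS_image [Finite V] (hv : IsInducedC5 G v)
    (hC4 : _root_.Free G (cycleGraph 4)) (hC6 : _root_.Free G (cycleGraph 6))
    (hP6 : _root_.Free G (pathGraph 6)) (hF2 : _root_.Free G F2) (hG : IsGraphAtom G)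
    (hmax : ∀ w : ZMod 5 → V, IsInducedC5 G w →
      (cycSdeg G w 5).ncard ≤ (cycSdeg G v 5).ncard)
    (σ : ZMod 5 ≃ ZMod 5)
    (hσ : ∀ i j, (σ j = σ i + 1 ∨ σ i = σ j + 1) ↔ (j = i + 1 ∨ i = j + 1)) :
    AntiCompleteTo G (cycS G v (σ '' {0})) (cycS G v (σ '' {0, 1, 2})) := by
  have hmax' : ∀ w : ZMod 5 → V, IsInducedC5 G w →
      (cycSdeg G w 5).ncard ≤ (cycSdeg G (v ∘ σ) 5).ncard := by
    simpa only [cycSdeg_five, cycS_comp_equiv, Set.image_univ_of_surjective σ.surjective]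
      using hmax
  simpa only [cycS_comp_equiv] using
    antiCompleteTo_cycS_zero (hv.comp_equiv σ hσ) hC4 hC6 hP6 hF2 hG hmax'

end

theorem stmt_9_general {V : Type*} [Fintype V] (G : SimpleGraph V)
    (hC4 : _root_.Free G (cycleGraph 4)) (hC6 : _root_.Free G (cycleGraph 6))
    (hF2 : _root_.Free G F2) (hP6 : _root_.Free G (pathGraph 6))
    (hsa : IsStrongAtom G)
    (v : ZMod 5 → V) (hv : IsInducedC5 G v)
    (hmax5 : ∀ w : ZMod 5 → V, IsInducedC5 G w →
      (cycSdeg G w 5).ncard ≤ (cycSdeg G v 5).ncard)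
    (i : ZMod 5) :
    AntiCompleteTo G (cycS G v {i})
      (cycS G v {i - 2, i - 1, i} ∪ cycS G v {i, i + 1, i + 2}) := by
  have key := antiCompleteTo_cycS_image hv hC4 hC6 hP6 hF2 hsa.1 hmax5
  intro a ha b hb
  rcases hb with hb | hb
  · refine key (Equiv.subLeft i) (fun j k => by simp only [Equiv.subLeft_apply]; grind)
      a (by simpa using ha) b ?_
    convert hb using 2
    ext j
    simp only [Set.image_insert_eq, Set.image_singleton, Set.mem_insert_iff,
      Set.mem_singleton_iff, Equiv.subLeft_apply, sub_zero]
    tauto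
  · refine key (Equiv.addLeft i) (fun j k => by simp only [Equiv.coe_addLeft]; grind)
      a (by simpa using ha) b ?_
    convert hb using 2
    simp [Set.image_insert_eq]

theorem stmt_9 {V : Type*} [Fintype V] (G : SimpleGraph V)
    (hC4 : _root_.Free G (cycleGraph 4)) (hC6 : _root_.Free G (cycleGraph 6))
    (hF1 : _root_.Free G F1) (hF2 : _root_.Free G F2) (hP6 : _root_.Free G (pathGraph 6))
    (hsa : IsStrongAtom G)
    (v : ZMod 5 → V) (hv : IsInducedC5 G v)
    (hmax5 : ∀ w : ZMod 5 → V, IsInducedC5 G w →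
      (cycSdeg G w 5).ncard ≤ (cycSdeg G v 5).ncard)
    (hmin3 : ∀ w : ZMod 5 → V, IsInducedC5 G w →
      (cycSdeg G w 5).ncard = (cycSdeg G v 5).ncard →
      (cycSdeg G v 3).ncard ≤ (cycSdeg G w 3).ncard)
    (i : ZMod 5) :
    AntiCompleteTo G (cycS G v {i})
      (cycS G v {i - 2, i - 1, i} ∪ cycS G v {i, i + 1, i + 2}) :=
  stmt_9_general G hC4 hC6 hF2 hP6 hsa v hv hmax5 i
end
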